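/- arXiv:1503.01378 — 3 statements merged into one kernel-verified Lean document; each statement's English description precedes it below -/
import Mathlib

section
/- For even d, the lattice U ⊕ ⟨-2d⟩ with basis F, s₀, s₁ having Gram matrix [[0,1,1],[1,-2,d-2],[1,d-2,-2]] contains no vector b with b² = -2 and b·s₁ = 1. -/
open Matrix

/-- The bilinear form of the lattice `U ⊕ ⟨-2d⟩` in the basis `{F, s₀, s₁}`,
with Gram matrix `[[0,1,1],[1,-2,d-2],[1,d-2,-2]]`. -/
def UdForm (d : ℤ) (v w : Fin 3 → ℤ) : ℤ :=
  v ⬝ᵥ ((!![0, 1, 1; 1, -2, d - 2; 1, d - 2, -2]) *ᵥ w)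

/-- For even `d`, the lattice `U ⊕ ⟨-2d⟩` with basis `F, s₀, s₁` and Gram
matrix `[[0,1,1],[1,-2,d-2],[1,d-2,-2]]` contains no vector `b` with
`b·b = -2` and `b·s₁ = 1`. -/
theorem no_neg_two_vector_meeting_section_once (d : ℤ) (hd : Even d) :
    ¬ ∃ b : Fin 3 → ℤ, UdForm d b b = -2 ∧ UdForm d b ![0, 0, 1] = 1 := by
  rintro ⟨b, h1, h2⟩
  obtain ⟨k, hk⟩ := hd
  simp only [UdForm, dotProduct, mulVec, Fin.sum_univ_three, Matrix.of_apply,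
    Matrix.cons_val', Matrix.cons_val_zero, Matrix.cons_val_one, Matrix.head_cons,
    Matrix.cons_val_two, Matrix.tail_cons, Matrix.empty_val', Matrix.cons_val_fin_one,
    Matrix.head_fin_const] at h1 h2
  set x := b 0; set y := b 1; set z := b 2
  have h1' : x * y + x * z + (d - 2) * (y * z) - y ^ 2 - z ^ 2 = -1 := by
    have h2x : 2 * (x * y + x * z + (d - 2) * (y * z) - y ^ 2 - z ^ 2) = 2 * (-1) := by
      linear_combination h1
    exact mul_left_cancel₀ two_ne_zero h2x
  have H1 := congrArg (fun n : ℤ => (n : ZMod 2)) h1'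
  have H2 := congrArg (fun n : ℤ => (n : ZMod 2)) h2
  have hd2 : (d : ZMod 2) = 0 := by
    have h : d = 2 * k := by omega
    rw [h]; push_cast
    rw [show ((2 : ZMod 2)) = 0 by decide, zero_mul]
  push_cast at H1 H2
  rw [hd2] at H1 H2
  generalize ((x : ZMod 2)) = X at H1 H2
  generalize ((y : ZMod 2)) = Y at H1 H2
  generalize ((z : ZMod 2)) = Z at H1 H2
  revert H1 H2
  ring_nf
  revert X Y Z
  decide
end

section
/- The change of basis {(n₁-n₂-n)/2, (n₁+n₂-n)/2, -n₁+2n} identifies the overlattice of ⟨4⟩⊕⟨-2⟩⊕⟨-2⟩ generated by n₁, n₂, n and (n₁+n₂+n)/2 with the lattice U ⊕ ⟨-4⟩. -/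
/-- The bilinear form of `⟨4⟩ ⊕ ⟨-2⟩ ⊕ ⟨-2⟩` extended to `ℚ³`. -/
def qForm (v w : Fin 3 → ℚ) : ℚ :=
  4 * v 0 * w 0 - 2 * v 1 * w 1 - 2 * v 2 * w 2

/-- The change of basis `{(n₁-n₂-n)/2, (n₁+n₂-n)/2, -n₁+2n}` identifies the
overlattice of `⟨4⟩⊕⟨-2⟩⊕⟨-2⟩` generated by `n₁, n₂, n, (n₁+n₂+n)/2` with
`U ⊕ ⟨-4⟩`: the three vectors are a ℤ-basis of the overlattice and have Gram
matrix `[[0,1,0],[1,0,0],[0,0,-4]]`. -/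
theorem overlattice_is_U_oplus_neg_four :
    ∀ (n₁ n₂ n : Fin 3 → ℚ),
      n₁ = ![1, 0, 0] → n₂ = ![0, 1, 0] → n = ![0, 0, 1] →
      (∀ e₁ e₂ e₃ : Fin 3 → ℚ,
        e₁ = (2⁻¹ : ℚ) • (n₁ - n₂ - n) → e₂ = (2⁻¹ : ℚ) • (n₁ + n₂ - n) →
        e₃ = -n₁ + 2 • n →
        ({v : Fin 3 → ℚ | ∃ a b c k : ℤ,
            v = a • n₁ + b • n₂ + c • n + k • ((2⁻¹ : ℚ) • (n₁ + n₂ + n))} =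
          {v : Fin 3 → ℚ | ∃ a b c : ℤ, v = a • e₁ + b • e₂ + c • e₃}) ∧
        qForm e₁ e₁ = 0 ∧ qForm e₁ e₂ = 1 ∧ qForm e₁ e₃ = 0 ∧
        qForm e₂ e₂ = 0 ∧ qForm e₂ e₃ = 0 ∧ qForm e₃ e₃ = -4) := by
  rintro n₁ n₂ n rfl rfl rfl e₁ e₂ e₃ rfl rfl rfl
  refine ⟨?_, ?_, ?_, ?_, ?_, ?_, ?_⟩
  · ext v
    simp only [Set.mem_setOf_eq]
    constructor
    · rintro ⟨a, b, c, k, rfl⟩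
      refine ⟨2*a - b + c + k, 2*a + b + c + 2*k, a + c + k, ?_⟩
      funext i
      fin_cases i <;>
        simp [Pi.smul_apply, zsmul_eq_mul, Matrix.smul_cons] <;> push_cast <;> ring
    · rintro ⟨x, y, z, rfl⟩
      refine ⟨-z, -x, 2*z - x - y, x + y, ?_⟩
      funext i
      fin_cases i <;>
        simp [Pi.smul_apply, zsmul_eq_mul, Matrix.smul_cons] <;> push_cast <;> ring
  all_goals simp [qForm] <;> norm_num
end

section
/- In the lattice U(2) ⊕ A₁⁸ with basis u₁, u₂, N₁, …, N₈ extended by the glue vector g = (N₁+⋯+N₈)/2 (giving U ⊕ E₈(2)), there is no vector l with l·l = -2 and l·N₈ = 1. -/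
open Matrix Finset

/-- Gram matrix of `U(2) ⊕ A₁⁸` on the basis `u₁, u₂, N₁, …, N₈`
(realized inside `ℚ¹⁰` so that the glue vector `(N₁+⋯+N₈)/2` makes sense). -/
def gramUE82 : Matrix (Fin 10) (Fin 10) ℚ :=
  Matrix.of fun i j =>
    if (i = 0 ∧ j = 1) ∨ (i = 1 ∧ j = 0) then 2
    else if i = j ∧ 2 ≤ (i : ℕ) then -2 else 0

/-- The associated bilinear form. -/
def BUE82 (v w : Fin 10 → ℚ) : ℚ := v ⬝ᵥ (gramUE82 *ᵥ w)

/-- Any integer `n` satisfies: `n^2 - n` is twice an integer. -/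
lemma sq_sub_self_even (n : ℤ) : ∃ m : ℤ, n ^ 2 - n = 2 * m := by
  rcases Int.even_mul_succ_self (n - 1) with ⟨m, hm⟩
  exact ⟨m, by ring_nf; ring_nf at hm; omega⟩

/-- In the lattice `U ⊕ E₈(2)`, the overlattice of `U(2) ⊕ A₁⁸` obtained by
adjoining the glue vector `g = (N₁+⋯+N₈)/2`, there is no vector `l` with
`l·l = -2` and `l·N₈ = 1`.  Every element of the lattice is of the form
`l = a₁u₁ + a₂u₂ + Σᵢ bᵢNᵢ - k·g` with `aⱼ, bᵢ ∈ ℤ` and `k ∈ {0,1}`. -/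
theorem no_neg_two_vector_in_U_E8two :
    ¬ ∃ (a₁ a₂ : ℤ) (b : Fin 8 → ℤ) (k : ℤ), (k = 0 ∨ k = 1) ∧
      (let u₁ : Fin 10 → ℚ := fun i => if i = 0 then 1 else 0
       let u₂ : Fin 10 → ℚ := fun i => if i = 1 then 1 else 0
       let Nv : Fin 8 → Fin 10 → ℚ := fun i j =>
         if (j : ℕ) = (i : ℕ) + 2 then 1 else 0
       let g : Fin 10 → ℚ := (2⁻¹ : ℚ) • ∑ i : Fin 8, Nv i
       let l : Fin 10 → ℚ :=
         (a₁ : ℚ) • u₁ + (a₂ : ℚ) • u₂ + (∑ i : Fin 8, (b i : ℚ) • Nv i)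
           - (k : ℚ) • g
       BUE82 l l = -2 ∧ BUE82 l (Nv 7) = 1) := by
  rintro ⟨a₁, a₂, b, k, hk, h⟩
  dsimp only at h
  obtain ⟨h1, h2⟩ := h
  simp only [BUE82, gramUE82, dotProduct, mulVec,
    Fin.sum_univ_succ, Fin.sum_univ_zero, Matrix.of_apply, Pi.add_apply, Pi.sub_apply,
    Pi.smul_apply, smul_eq_mul] at h1 h2
  norm_num [Fin.ext_iff, show ((7 : Fin 8) : ℕ) = 7 from rfl] at h1 h2
  simp only [show (Fin.succ 2 : Fin 8) = 3 from rfl,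
    show ((Fin.succ 2).succ : Fin 8) = 4 from rfl,
    show ((Fin.succ 2).succ.succ : Fin 8) = 5 from rfl,
    show ((Fin.succ 2).succ.succ.succ : Fin 8) = 6 from rfl,
    show ((Fin.succ 2).succ.succ.succ.succ : Fin 8) = 7 from rfl] at h1 h2
  rcases hk with rfl | rfl
  · -- k = 0 : h2 gives 2 * b 7 = -1, impossible
    norm_num at h2
    have hq : ((b 7 : ℚ)) * 2 = -1 := by linarith
    have : (b 7 * 2 : ℤ) = -1 := by exact_mod_cast hq
    omega
  · -- k = 1 : h2 gives b 7 = 0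
    have hb7 : ((b 7 : ℚ)) = 0 := by push_cast at h2 ⊢; linarith
    have hb7' : b 7 = 0 := by exact_mod_cast hb7
    rw [hb7] at h1
    have key : ((4 * (a₁ * a₂) - 2 * (b 0 ^ 2 + b 1 ^ 2 + b 2 ^ 2 + b 3 ^ 2 + b 4 ^ 2
        + b 5 ^ 2 + b 6 ^ 2) + 2 * (b 0 + b 1 + b 2 + b 3 + b 4 + b 5 + b 6) - 4 : ℤ) : ℚ)
        = -2 := by
      push_cast
      linear_combination h1
    have keyZ : (4 * (a₁ * a₂) - 2 * (b 0 ^ 2 + b 1 ^ 2 + b 2 ^ 2 + b 3 ^ 2 + b 4 ^ 2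
        + b 5 ^ 2 + b 6 ^ 2) + 2 * (b 0 + b 1 + b 2 + b 3 + b 4 + b 5 + b 6) - 4 : ℤ)
        = -2 := by exact_mod_cast key
    obtain ⟨m0, hm0⟩ := sq_sub_self_even (b 0)
    obtain ⟨m1, hm1⟩ := sq_sub_self_even (b 1)
    obtain ⟨m2, hm2⟩ := sq_sub_self_even (b 2)
    obtain ⟨m3, hm3⟩ := sq_sub_self_even (b 3)
    obtain ⟨m4, hm4⟩ := sq_sub_self_even (b 4)
    obtain ⟨m5, hm5⟩ := sq_sub_self_even (b 5)
    obtain ⟨m6, hm6⟩ := sq_sub_self_even (b 6)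
    have h4 : ∃ q M : ℤ, 4 * q - 4 * M = 2 :=
      ⟨a₁ * a₂, m0 + m1 + m2 + m3 + m4 + m5 + m6, by linarith⟩
    obtain ⟨q, M, h4⟩ := h4
    omega
end
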